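/- arXiv:1311.2046 — 4 statements merged into one kernel-verified Lean document; each statement's English description precedes it below -/
import Mathlib

section
/- If f : [0,1] → [0,∞) satisfies f((x+y)/2) ≥ (f(x)+f(y))/2 for all 0 ≤ x ≤ y ≤ 1, then f(x) ≥ f(1)·x for all x ∈ [0,1]. -/
/-- If `f : [0,1] → [0,∞)` is midpoint concave, then `f x ≥ f 1 * x` on `[0,1]`. -/
theorem midpoint_concave_superlinear (f : ℝ → ℝ)
    (hnn : ∀ x ∈ Set.Icc (0:ℝ) 1, 0 ≤ f x)
    (hmid : ∀ x y : ℝ, 0 ≤ x → x ≤ y → y ≤ 1 → (f x + f y) / 2 ≤ f ((x + y) / 2)) :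
    ∀ x ∈ Set.Icc (0:ℝ) 1, f 1 * x ≤ f x := by
  have h1 : 0 ≤ f 1 := hnn 1 ⟨zero_le_one, le_refl 1⟩
  have key : ∀ n : ℕ, ∀ x ∈ Set.Icc (0:ℝ) 1, (x - (1/2)^n) * f 1 ≤ f x := by
    intro n
    induction n with
    | zero =>
      intro x hx
      have hx1 : x - (1/2:ℝ)^0 ≤ 0 := by
        simp only [pow_zero]
        linarith [hx.2]
      have : (x - (1/2:ℝ)^0) * f 1 ≤ 0 := mul_nonpos_of_nonpos_of_nonneg hx1 h1
      linarith [hnn x hx]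
    | succ n ih =>
      intro x hx
      obtain ⟨hx0, hx1⟩ := hx
      rw [pow_succ]
      by_cases hhalf : (1:ℝ)/2 ≤ x
      · have hm := hmid (2*x - 1) 1 (by linarith) (by linarith) le_rfl
        have hxeq : ((2*x - 1) + 1) / 2 = x := by ring
        rw [hxeq] at hm
        have ih' := ih (2*x - 1) ⟨by linarith, by linarith⟩
        have hring : (x - (1/2:ℝ)^n * (1/2)) * f 1
            = (((2*x - 1) - (1/2)^n) * f 1 + f 1) / 2 - (f 1 - f 1) := by ring
        rw [hring]
        linarith
      · push_neg at hhalf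
        have hm := hmid 0 (2*x) le_rfl (by linarith) (by linarith)
        have hxeq : ((0:ℝ) + 2*x) / 2 = x := by ring
        rw [hxeq] at hm
        have ih' := ih (2*x) ⟨by linarith, by linarith⟩
        have h0 : 0 ≤ f 0 := hnn 0 ⟨le_rfl, zero_le_one⟩
        have hring : (x - (1/2:ℝ)^n * (1/2)) * f 1 = ((2*x - (1/2)^n) * f 1) / 2 := by ring
        rw [hring]
        linarith
  intro x hx
  by_contra hcon
  push_neg at hcon
  set ε := f 1 * x - f x with hε
  have hεpos : 0 < ε := by simp [hε]; linarith
  obtain ⟨n, hn⟩ := pow_unbounded_of_one_lt (f 1 / ε) (by norm_num : (1:ℝ) < 2)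
  have h2n : (0:ℝ) < 2 ^ n := by positivity
  have hf1 : f 1 < ε * 2 ^ n := by
    rwa [div_lt_iff₀ hεpos, mul_comm] at hn
  have hsmall : (1/2:ℝ)^n * f 1 < ε := by
    rw [div_pow, one_pow, div_mul_eq_mul_div, div_lt_iff₀ h2n, mul_comm ε]
    linarith
  have hk := key n x hx
  nlinarith
end

section
/- For x in (0,1), given x₀ ∈ [0,1] and a midpoint-superlinear function f : [0,1] → [0,∞) with f(1) = 1 satisfying f(x₀ + λ(1 − x₀)) ≥ λ for all dyadic rationals λ ∈ [0,1], one has f(x) ≥ (x − xₙ)/(1 − xₙ) where xₙ := (2ⁿ x − kₙ)/(2ⁿ − kₙ) for the unique integer kₙ with 0 ≤ kₙ ≤ 2ⁿ x and |x − kₙ/2ⁿ| < 2⁻ⁿ; moreover xₙ → 0 as n → ∞. -/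
/-- The approximation step: for `x ∈ (0,1)`, with `kₙ` the unique integer satisfying
`0 ≤ kₙ ≤ 2ⁿ x` and `|x - kₙ/2ⁿ| < 2⁻ⁿ`, and `xₙ = (x - kₙ/2ⁿ)/(1 - kₙ/2ⁿ)`, a
midpoint-superlinear `f` with `f 1 = 1` satisfying `f (x₀ + λ(1-x₀)) ≥ λ` for all dyadic
rationals `λ ∈ [0,1]` satisfies `f x ≥ (x - xₙ)/(1 - xₙ)`; moreover `0 ≤ xₙ ≤ 1/(2ⁿ(1-x))`
and `xₙ → 0`. -/
theorem approximation_step (x : ℝ) (hx : x ∈ Set.Ioo (0:ℝ) 1) (f : ℝ → ℝ)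
    (hnn : ∀ t ∈ Set.Icc (0:ℝ) 1, 0 ≤ f t) (hf1 : f 1 = 1)
    (hdy : ∀ x₀ ∈ Set.Icc (0:ℝ) 1, ∀ l : ℝ, l ∈ Set.Icc (0:ℝ) 1 →
      (∃ k N : ℕ, k ≤ 2 ^ N ∧ l = (k : ℝ) / 2 ^ N) → l ≤ f (x₀ + l * (1 - x₀)))
    (k : ℕ → ℕ)
    (hk : ∀ n, (k n : ℝ) ≤ 2 ^ n * x ∧ |x - (k n : ℝ) / 2 ^ n| < ((2:ℝ) ^ n)⁻¹) :
    (∀ n, ∃! m : ℕ, (m : ℝ) ≤ 2 ^ n * x ∧ |x - (m : ℝ) / 2 ^ n| < ((2:ℝ) ^ n)⁻¹) ∧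
    (∀ n, 0 ≤ (x - (k n : ℝ) / 2 ^ n) / (1 - (k n : ℝ) / 2 ^ n) ∧
      (x - (k n : ℝ) / 2 ^ n) / (1 - (k n : ℝ) / 2 ^ n) ≤ 1 / (2 ^ n * (1 - x)) ∧
      (x - (x - (k n : ℝ) / 2 ^ n) / (1 - (k n : ℝ) / 2 ^ n)) /
          (1 - (x - (k n : ℝ) / 2 ^ n) / (1 - (k n : ℝ) / 2 ^ n)) ≤ f x) ∧
    Filter.Tendsto (fun n => (x - (k n : ℝ) / 2 ^ n) / (1 - (k n : ℝ) / 2 ^ n))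
      Filter.atTop (nhds 0) := by
  obtain ⟨hx0, hx1⟩ := hx
  have hxlt : 1 - x > 0 := by linarith
  -- basic facts per n
  have key : ∀ n, 0 ≤ x - (k n : ℝ) / 2 ^ n ∧ x - (k n : ℝ) / 2 ^ n < ((2:ℝ)^n)⁻¹ ∧
      (k n : ℝ) / 2 ^ n ≤ x := by
    intro n
    have h2 : (0:ℝ) < 2 ^ n := by positivity
    obtain ⟨h1, habs⟩ := hk n
    have hcx : (k n : ℝ) / 2 ^ n ≤ x := by
      rw [div_le_iff₀ h2]; linarith [mul_comm ((2:ℝ)^n) x]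
    refine ⟨by linarith, ?_, hcx⟩
    have := abs_lt.1 habs
    linarith [this.2]
  refine ⟨?_, ?_, ?_⟩
  · -- uniqueness
    intro n
    refine ⟨k n, hk n, ?_⟩
    have h2 : (0:ℝ) < 2 ^ n := by positivity
    have bound : ∀ m : ℕ, ((m : ℝ) ≤ 2 ^ n * x ∧ |x - (m : ℝ) / 2 ^ n| < ((2:ℝ)^n)⁻¹) →
        (m : ℝ) ≤ 2 ^ n * x ∧ 2 ^ n * x < (m : ℝ) + 1 := by
      intro m ⟨h1, habs⟩
      refine ⟨h1, ?_⟩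
      have := (abs_lt.1 habs).2
      have : x < (m : ℝ) / 2 ^ n + ((2:ℝ)^n)⁻¹ := by linarith
      calc 2 ^ n * x < 2 ^ n * ((m : ℝ) / 2 ^ n + ((2:ℝ)^n)⁻¹) := by
            exact (mul_lt_mul_iff_right₀ h2).2 this
        _ = (m : ℝ) + 1 := by field_simp
    intro m hm
    obtain ⟨hm1, hm2⟩ := bound m hm
    obtain ⟨hk1, hk2⟩ := bound (k n) (hk n)
    have a1 : (m : ℝ) < (k n : ℝ) + 1 := lt_of_le_of_lt hm1 hk2
    have a2 : (k n : ℝ) < (m : ℝ) + 1 := lt_of_le_of_lt hk1 hm2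
    have : m ≤ k n := by exact_mod_cast Nat.lt_succ_iff.1 (by exact_mod_cast a1)
    have : k n ≤ m := by exact_mod_cast Nat.lt_succ_iff.1 (by exact_mod_cast a2)
    omega
  · intro n
    obtain ⟨hnum, hlt, hcx⟩ := key n
    have h2 : (0:ℝ) < 2 ^ n := by positivity
    set c := (k n : ℝ) / 2 ^ n with hc
    have hc0 : 0 ≤ c := by positivity
    have hden : 0 < 1 - c := by linarith
    have hxn0 : 0 ≤ (x - c) / (1 - c) := div_nonneg hnum hden.le
    have hxnle : (x - c) / (1 - c) ≤ 1 / (2 ^ n * (1 - x)) := by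
      rw [div_le_div_iff₀ hden (by positivity)]
      have h1 : (x - c) * (2 ^ n * (1 - x)) ≤ ((2:ℝ)^n)⁻¹ * (2 ^ n * (1 - x)) := by
        apply mul_le_mul_of_nonneg_right hlt.le (by positivity)
      have h2' : ((2:ℝ)^n)⁻¹ * (2 ^ n * (1 - x)) = 1 - x := by field_simp
      nlinarith
    refine ⟨hxn0, hxnle, ?_⟩
    set y := (x - c) / (1 - c) with hy
    have hylt1 : y < 1 := by
      rw [hy, div_lt_one hden]; linarith
    have hxeq : x = y + c * (1 - y) := by
      rw [hy]; field_simp; ring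
    have hcle1 : c ≤ 1 := le_trans hcx hx1.le
    have hkle : k n ≤ 2 ^ n := by
      have : (k n : ℝ) ≤ 2 ^ n := by
        rw [hc] at hcle1
        have := (div_le_one h2).1 hcle1
        exact this
      exact_mod_cast this
    have hfc : c ≤ f x := by
      have := hdy y ⟨hxn0, hylt1.le⟩ c ⟨hc0, hcle1⟩ ⟨k n, n, hkle, hc⟩
      rwa [← hxeq] at this
    have : (x - y) / (1 - y) = c := by
      rw [div_eq_iff (by linarith : (1:ℝ) - y ≠ 0)]
      linarith [hxeq]
    rw [this]; exact hfc
  · -- tendsto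
    have h0 : ∀ n, 0 ≤ (x - (k n : ℝ) / 2 ^ n) / (1 - (k n : ℝ) / 2 ^ n) := by
      intro n
      obtain ⟨hnum, hlt, hcx⟩ := key n
      exact div_nonneg hnum (by linarith)
    have hle : ∀ n, (x - (k n : ℝ) / 2 ^ n) / (1 - (k n : ℝ) / 2 ^ n)
        ≤ (1 - x)⁻¹ * (1/2 : ℝ) ^ n := by
      intro n
      obtain ⟨hnum, hlt, hcx⟩ := key n
      have h2 : (0:ℝ) < 2 ^ n := by positivity
      have hden : 0 < 1 - (k n : ℝ) / 2 ^ n := by linarith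
      have e : (1 - x)⁻¹ * (1/2 : ℝ) ^ n = 1 / (2 ^ n * (1 - x)) := by
        rw [div_pow]; field_simp; ring
      rw [e, div_le_div_iff₀ hden (by positivity)]
      have h1 : (x - (k n : ℝ) / 2 ^ n) * (2 ^ n * (1 - x))
          ≤ ((2:ℝ)^n)⁻¹ * (2 ^ n * (1 - x)) :=
        mul_le_mul_of_nonneg_right hlt.le (by positivity)
      have h2' : ((2:ℝ)^n)⁻¹ * (2 ^ n * (1 - x)) = 1 - x := by field_simp
      nlinarith
    have ht : Filter.Tendsto (fun n : ℕ => (1 - x)⁻¹ * (1/2 : ℝ) ^ n)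
        Filter.atTop (nhds 0) := by
      simpa using (tendsto_pow_atTop_nhds_zero_of_lt_one (by norm_num) (by norm_num)
        : Filter.Tendsto (fun n : ℕ => (1/2 : ℝ) ^ n) Filter.atTop (nhds 0)).const_mul (1-x)⁻¹
    exact squeeze_zero h0 hle ht
end

section
/- Let I = [0,1), 0 < ε < 1, α ∈ (0, 1/2), and write θ := 1 − 2α in binary as θ = ∑_{j≥1} 2^{−j} b_j with b_j ∈ {0,1}. Let I_j = [e_j, e_{j+1}) with e_j = 1/2 − 2^{−j}. Define the operator T on L¹(I) by Tf = (1−ε)∑_{j≥1} b_j 1_{I_j}·S_{I_j}f + (1−ε)1_{I_+}·g_+, where S_J f denotes the rescaling of f to J and g_+ ∈ L¹ is a fixed nonnegative function on I_+ = [1/2,1). Then T is a contraction on L¹(I) with contraction constant ξ = (1−ε)(1−2α)/2 < 1, and hence T has a unique fixed point in L¹(I). -/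
/-!
On `I_j` the operator is `(1 - ε) b_j` times an affine copy of `f|[0,1)` squeezed into an interval
of length `2^{-j-1}`, while the `g₊`-term does not depend on `f`. Hence
`∫ |Tf₁ - Tf₂| = (1 - ε) (∑ⱼ bⱼ 2^{-j-1}) ∫ |f₁ - f₂| = ξ ∫ |f₁ - f₂|` exactly, and Banach's fixed
point theorem in `L¹[0,1)` gives the fixed point; uniqueness up to a.e. equality is the same
estimate applied to two fixed points.
-/

open MeasureTheory Set

theorem exists_ae_fixedPoint_of_integral_norm_sub_le {α E : Type*} [MeasurableSpace α]
    [NormedAddCommGroup E] [CompleteSpace E] {μ : Measure α} {T : (α → E) → α → E} {ξ : ℝ}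
    (hξ : ξ < 1) (hT : ∀ f, Integrable f μ → Integrable (T f) μ)
    (hTξ : ∀ f g, Integrable f μ → Integrable g μ →
      ∫ x, ‖T f x - T g x‖ ∂μ ≤ ξ * ∫ x, ‖f x - g x‖ ∂μ) :
    ∃ f, Integrable f μ ∧ T f =ᵐ[μ] f ∧ ∀ h, Integrable h μ → T h =ᵐ[μ] h → h =ᵐ[μ] f := by
  have hdist (u v : Lp E 1 μ) : dist u v = ∫ x, ‖u x - v x‖ ∂μ := by
    simp_rw [L1.dist_eq_integral_dist, dist_eq_norm]
  let Φ : Lp E 1 μ → Lp E 1 μ := fun u => (hT u (L1.integrable_coeFn u)).toL1 _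
  have hΦ_ae (u : Lp E 1 μ) : Φ u =ᵐ[μ] T u := Integrable.coeFn_toL1 _
  have hΦ : ContractingWith ξ.toNNReal Φ := by
    refine ⟨Real.toNNReal_lt_one.2 hξ, LipschitzWith.of_dist_le_mul fun u v => ?_⟩
    calc dist (Φ u) (Φ v) = ∫ x, ‖T u x - T v x‖ ∂μ := by
          rw [hdist]
          refine integral_congr_ae ?_
          filter_upwards [hΦ_ae u, hΦ_ae v] with x hu hv
          rw [hu, hv]
      _ ≤ ξ * dist u v := hdist u v ▸ hTξ _ _ (L1.integrable_coeFn u) (L1.integrable_coeFn v)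
      _ ≤ ξ.toNNReal * dist u v := by gcongr; exact Real.le_coe_toNNReal ξ
  have : Nonempty (Lp E 1 μ) := ⟨0⟩
  set u := ContractingWith.fixedPoint Φ hΦ
  have hTu : T u =ᵐ[μ] u := by
    have := hΦ_ae u
    rw [hΦ.fixedPoint_isFixedPt] at this
    exact this.symm
  refine ⟨u, L1.integrable_coeFn u, hTu, fun h hh hTh => ?_⟩
  have hle : ∫ x, ‖h x - u x‖ ∂μ ≤ ξ * ∫ x, ‖h x - u x‖ ∂μ := by
    refine le_of_eq_of_le (integral_congr_ae ?_) (hTξ _ _ hh (L1.integrable_coeFn u))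
    filter_upwards [hTh, hTu] with x h₁ h₂
    rw [h₁, h₂]
  have hzero : ∫ x, ‖h x - u x‖ ∂μ = 0 := by
    have : 0 ≤ ∫ x, ‖h x - u x‖ ∂μ := integral_nonneg fun x => norm_nonneg _
    nlinarith
  filter_upwards [(integral_eq_zero_iff_of_nonneg (fun x => norm_nonneg _)
    (hh.sub (L1.integrable_coeFn u)).norm).1 hzero] with x hx
  exact sub_eq_zero.1 (norm_eq_zero.1 hx)

section AffineRescale

variable {c k : ℝ}

theorem sub_mul_mem_Ico_zero_one_iff (hk : 0 < k) {t : ℝ} :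
    (t - c) * k ∈ Ico 0 1 ↔ t ∈ Ico c (c + k⁻¹) := by
  simp only [mem_Ico, mul_nonneg_iff_of_pos_right hk, sub_nonneg, ← lt_div_iff₀ hk, one_div,
    sub_lt_iff_lt_add']

theorem setIntegral_Ico_comp_sub_mul (hk : 0 < k) (q : ℝ → ℝ) :
    ∫ t in Ico c (c + k⁻¹), q ((t - c) * k) = k⁻¹ * ∫ s in Ico 0 1, q s := by
  have hind : (Ico c (c + k⁻¹)).indicator (fun t => q ((t - c) * k)) =
      fun t => (Ico 0 1).indicator q ((t - c) * k) := by
    ext t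
    simp only [indicator_apply, sub_mul_mem_Ico_zero_one_iff hk]
  rw [← integral_indicator measurableSet_Ico, hind,
    integral_sub_right_eq_self (fun t => (Ico 0 1).indicator q (t * k)),
    Measure.integral_comp_mul_right, integral_indicator measurableSet_Ico,
    abs_of_pos (inv_pos.2 hk), smul_eq_mul]

theorem MeasureTheory.IntegrableOn.comp_sub_mul_Ico {q : ℝ → ℝ} (hk : 0 < k)
    (hq : IntegrableOn q (Ico 0 1)) :
    IntegrableOn (fun t => q ((t - c) * k)) (Ico c (c + k⁻¹)) := by
  have hind : Integrable fun t => (Ico 0 1).indicator q ((t - c) * k) :=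
    ((hq.integrable_indicator measurableSet_Ico).comp_mul_right' hk.ne').comp_sub_right c
  refine hind.integrableOn.congr_fun (fun t ht => ?_) measurableSet_Ico
  exact indicator_of_mem ((sub_mul_mem_Ico_zero_one_iff hk).2 ht) q

end AffineRescale

/-- The paper's `∑ⱼ wⱼ 1_{Jⱼ} S_{Jⱼ} f` for the consecutive intervals `Jⱼ = [c j, c (j + 1))`;
the scale `k j` is `1 / |Jⱼ|` in all uses. -/
noncomputable def rescaleSum (c k w : ℕ → ℝ) (f : ℝ → ℝ) (t : ℝ) : ℝ :=
  ∑' j, w j * (Ico (c j) (c (j + 1))).indicator (fun s => f ((s - c j) * k j)) t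

section RescaleSum

variable {c k w : ℕ → ℝ} {f : ℝ → ℝ} {t : ℝ}

theorem rescaleSum_apply_of_mem (hc : Monotone c) {i : ℕ} (ht : t ∈ Ico (c i) (c (i + 1))) :
    rescaleSum c k w f t = w i * f ((t - c i) * k i) := by
  rw [rescaleSum, tsum_eq_single i fun j hj => ?_, indicator_of_mem ht]
  rw [indicator_of_notMem fun htj => ?_, mul_zero]
  exact disjoint_left.1 (hc.pairwise_disjoint_on_Ico_succ hj) htj ht

theorem rescaleSum_apply_of_forall_notMem (ht : ∀ j, t ∉ Ico (c j) (c (j + 1))) :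
    rescaleSum c k w f t = 0 := by
  simp only [rescaleSum, indicator_of_notMem (ht _), mul_zero, tsum_zero]

theorem rescaleSum_sub (hc : Monotone c) (f₁ f₂ : ℝ → ℝ) (t : ℝ) :
    rescaleSum c k w (f₁ - f₂) t = rescaleSum c k w f₁ t - rescaleSum c k w f₂ t := by
  by_cases ht : ∃ i, t ∈ Ico (c i) (c (i + 1))
  · obtain ⟨i, hi⟩ := ht
    simp only [rescaleSum_apply_of_mem hc hi, Pi.sub_apply, mul_sub]
  · push Not at ht
    simp only [rescaleSum_apply_of_forall_notMem ht, sub_zero]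


theorem monotone_of_succ_eq_add_inv (hk : ∀ j, 0 < k j) (hstep : ∀ j, c (j + 1) = c j + (k j)⁻¹) :
    Monotone c :=
  monotone_nat_of_le_succ fun j => by
    rw [hstep j]
    exact le_add_of_nonneg_right (inv_pos.2 (hk j)).le

theorem integrableOn_Ico_rescaleSum
    (hk : ∀ j, 0 < k j) (hstep : ∀ j, c (j + 1) = c j + (k j)⁻¹)
    (hf : IntegrableOn f (Ico 0 1)) (j : ℕ) :
    IntegrableOn (rescaleSum c k w f) (Ico (c j) (c (j + 1))) := by
  have h := (hf.comp_sub_mul_Ico (c := c j) (hk j)).const_mul (w j)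
  rw [← hstep j] at h
  refine IntegrableOn.congr_fun h (fun t ht => ?_) measurableSet_Ico
  exact (rescaleSum_apply_of_mem (monotone_of_succ_eq_add_inv hk hstep) ht).symm

theorem setIntegral_Ico_abs_rescaleSum
    (hk : ∀ j, 0 < k j) (hstep : ∀ j, c (j + 1) = c j + (k j)⁻¹)
    (j : ℕ) : ∫ t in Ico (c j) (c (j + 1)), |rescaleSum c k w f t| =
      |w j| * (k j)⁻¹ * ∫ s in Ico 0 1, |f s| := by
  calc ∫ t in Ico (c j) (c (j + 1)), |rescaleSum c k w f t|
      = ∫ t in Ico (c j) (c j + (k j)⁻¹), |w j| * |f ((t - c j) * k j)| := by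
        rw [← hstep j]
        refine setIntegral_congr_fun measurableSet_Ico fun t ht => ?_
        rw [rescaleSum_apply_of_mem (monotone_of_succ_eq_add_inv hk hstep) ht, abs_mul]
    _ = |w j| * (k j)⁻¹ * ∫ s in Ico 0 1, |f s| := by
        rw [setIntegral_Ico_comp_sub_mul (hk j) fun s => |w j| * |f s|, integral_const_mul]
        ring

theorem integrableOn_iUnion_rescaleSum
    (hk : ∀ j, 0 < k j) (hstep : ∀ j, c (j + 1) = c j + (k j)⁻¹)
    (hw : Summable fun j => |w j| * (k j)⁻¹) (hf : IntegrableOn f (Ico 0 1)) :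
    IntegrableOn (rescaleSum c k w f) (⋃ j, Ico (c j) (c (j + 1))) := by
  refine integrableOn_iUnion_of_summable_integral_norm
    (integrableOn_Ico_rescaleSum hk hstep hf) ?_
  simp only [Real.norm_eq_abs, setIntegral_Ico_abs_rescaleSum hk hstep]
  exact hw.mul_right _

variable {S : Set ℝ}

theorem rescaleSum_eq_zero_of_mem_sdiff_iUnion (ht : t ∈ S \ ⋃ j, Ico (c j) (c (j + 1))) :
    rescaleSum c k w f t = 0 :=
  rescaleSum_apply_of_forall_notMem fun j htj => ht.2 (mem_iUnion.2 ⟨j, htj⟩)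

theorem integrableOn_rescaleSum
    (hk : ∀ j, 0 < k j) (hstep : ∀ j, c (j + 1) = c j + (k j)⁻¹)
    (hS : MeasurableSet S) (hw : Summable fun j => |w j| * (k j)⁻¹)
    (hf : IntegrableOn f (Ico 0 1)) : IntegrableOn (rescaleSum c k w f) S :=
  (integrableOn_iUnion_rescaleSum hk hstep hw hf).of_forall_sdiff_eq_zero hS
    fun _ => rescaleSum_eq_zero_of_mem_sdiff_iUnion

theorem setIntegral_abs_rescaleSum
    (hk : ∀ j, 0 < k j) (hstep : ∀ j, c (j + 1) = c j + (k j)⁻¹)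
    (hS : MeasurableSet S) (hcS : ∀ j, Ico (c j) (c (j + 1)) ⊆ S)
    (hw : Summable fun j => |w j| * (k j)⁻¹) (hf : IntegrableOn f (Ico 0 1)) :
    ∫ t in S, |rescaleSum c k w f t| = (∑' j, |w j| * (k j)⁻¹) * ∫ s in Ico 0 1, |f s| := by
  have hdisj : Pairwise (Function.onFun Disjoint fun j => Ico (c j) (c (j + 1))) :=
    (monotone_of_succ_eq_add_inv hk hstep).pairwise_disjoint_on_Ico_succ
  rw [setIntegral_eq_of_subset_of_forall_sdiff_eq_zero hS (iUnion_subset hcS)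
      fun t ht => by rw [rescaleSum_eq_zero_of_mem_sdiff_iUnion ht, abs_zero],
    integral_iUnion (fun _ => measurableSet_Ico) hdisj
      (integrableOn_iUnion_rescaleSum hk hstep hw hf).abs,
    tsum_congr (setIntegral_Ico_abs_rescaleSum hk hstep), tsum_mul_right]

end RescaleSum

/-- The paper's `e_{j+1}`, so that `[dyadicEdge j, dyadicEdge (j + 1))` is `I_{j+1}`. -/
noncomputable def dyadicEdge (j : ℕ) : ℝ := 1 / 2 - ((2 : ℝ) ^ (j + 1))⁻¹

theorem dyadicEdge_succ (j : ℕ) : dyadicEdge (j + 1) = dyadicEdge j + ((2 : ℝ) ^ (j + 2))⁻¹ := by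
  rw [dyadicEdge, dyadicEdge, pow_succ _ (j + 1), mul_inv]
  ring

theorem monotone_dyadicEdge : Monotone dyadicEdge :=
  monotone_of_succ_eq_add_inv (fun _ => by positivity) dyadicEdge_succ

theorem Ico_dyadicEdge_subset_Ico_zero_one (j : ℕ) :
    Ico (dyadicEdge j) (dyadicEdge (j + 1)) ⊆ Ico 0 1 := by
  refine Ico_subset_Ico ?_ ?_ <;> rw [dyadicEdge]
  · have : ((2 : ℝ) ^ (j + 1))⁻¹ ≤ 2⁻¹ := inv_anti₀ two_pos (le_self_pow₀ one_le_two (by omega))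
    linarith
  · have : (0 : ℝ) < ((2 : ℝ) ^ (j + 1 + 1))⁻¹ := by positivity
    linarith

section Dyadic

variable {w : ℕ → ℝ} {f : ℝ → ℝ}

theorem summable_abs_mul_inv_two_pow (hw : ∀ j, |w j| ≤ 1) :
    Summable fun j => |w j| * ((2 : ℝ) ^ (j + 2))⁻¹ := by
  refine summable_geometric_two.of_nonneg_of_le (fun j => by positivity) fun j => ?_
  calc |w j| * ((2 : ℝ) ^ (j + 2))⁻¹ ≤ ((2 : ℝ) ^ (j + 2))⁻¹ :=
        mul_le_of_le_one_left (by positivity) (hw j)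
    _ ≤ (1 / 2) ^ j := by
        rw [one_div, inv_pow]
        exact inv_anti₀ (by positivity) (pow_le_pow_right₀ one_le_two (by omega))

theorem integrableOn_rescaleSum_dyadicEdge (hw : ∀ j, |w j| ≤ 1)
    (hf : IntegrableOn f (Ico 0 1)) :
    IntegrableOn (rescaleSum dyadicEdge (fun j => 2 ^ (j + 2)) w f) (Ico 0 1) :=
  integrableOn_rescaleSum (fun _ => by positivity) dyadicEdge_succ measurableSet_Ico
    (summable_abs_mul_inv_two_pow hw) hf

theorem setIntegral_abs_rescaleSum_dyadicEdge (hw : ∀ j, |w j| ≤ 1)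
    (hf : IntegrableOn f (Ico 0 1)) :
    ∫ t in Ico 0 1, |rescaleSum dyadicEdge (fun j => 2 ^ (j + 2)) w f t| =
      (∑' j, |w j| * ((2 : ℝ) ^ (j + 2))⁻¹) * ∫ s in Ico 0 1, |f s| :=
  setIntegral_abs_rescaleSum (fun _ => by positivity) dyadicEdge_succ measurableSet_Ico
    Ico_dyadicEdge_subset_Ico_zero_one (summable_abs_mul_inv_two_pow hw) hf

end Dyadic

theorem contraction_fixed_point_general (ε a : ℝ) (hε : 0 < ε) (hε1 : ε < 1)
    (ha : 0 < a)
    (b : ℕ → ℝ) (hb : ∀ j, b j = 0 ∨ b j = 1)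
    (hbin : ∑' j : ℕ, b (j + 1) * ((2 : ℝ) ^ (j + 1))⁻¹ = 1 - 2 * a)
    (g : ℝ → ℝ) (hgint : IntegrableOn g (Set.Ico (1/2 : ℝ) 1))
    (e : ℕ → ℝ) (he : e = fun j => 1 / 2 - ((2 : ℝ) ^ j)⁻¹)
    (T : (ℝ → ℝ) → ℝ → ℝ)
    (hT : T = fun f t =>
      (1 - ε) * (∑' j : ℕ, b (j + 1) *
          (Set.Ico (e (j + 1)) (e (j + 2))).indicator
            (fun s => f ((s - e (j + 1)) * 2 ^ (j + 2))) t) +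
      (1 - ε) * (Set.Ico (1/2 : ℝ) 1).indicator g t)
    (ξ : ℝ) (hξ : ξ = (1 - ε) * (1 - 2 * a) / 2) :
    (∀ f₁ f₂ : ℝ → ℝ, IntegrableOn f₁ (Set.Ico (0:ℝ) 1) →
        IntegrableOn f₂ (Set.Ico (0:ℝ) 1) →
      ∫ t in Set.Ico (0:ℝ) 1, |T f₁ t - T f₂ t| ≤ ξ * ∫ t in Set.Ico (0:ℝ) 1, |f₁ t - f₂ t|) ∧
    ξ < 1 ∧
    (∃ f : ℝ → ℝ, IntegrableOn f (Set.Ico (0:ℝ) 1) ∧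
      (∀ᵐ t ∂(volume.restrict (Set.Ico (0:ℝ) 1)), T f t = f t) ∧
      ∀ h : ℝ → ℝ, IntegrableOn h (Set.Ico (0:ℝ) 1) →
        (∀ᵐ t ∂(volume.restrict (Set.Ico (0:ℝ) 1)), T h t = h t) →
        ∀ᵐ t ∂(volume.restrict (Set.Ico (0:ℝ) 1)), h t = f t) := by
  have hb_abs (j : ℕ) : |b j| = b j := by rcases hb j with h | h <;> simp [h]
  have hb_le (j : ℕ) : |b (j + 1)| ≤ 1 := by rcases hb (j + 1) with h | h <;> simp [h]
  have hTP (f : ℝ → ℝ) : T f = fun t =>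
      (1 - ε) * rescaleSum dyadicEdge (fun j => 2 ^ (j + 2)) (fun j => b (j + 1)) f t +
        (1 - ε) * (Set.Ico (1 / 2 : ℝ) 1).indicator g t := by
    subst he hT
    rfl
  have hweight : ∑' j, |b (j + 1)| * ((2 : ℝ) ^ (j + 2))⁻¹ = (1 - 2 * a) / 2 := by
    simp only [hb_abs, pow_succ _ (_ + 1), mul_inv, ← mul_assoc, tsum_mul_right, hbin]
    ring
  have hcontr (f₁ f₂ : ℝ → ℝ) (h₁ : IntegrableOn f₁ (Set.Ico (0:ℝ) 1))
      (h₂ : IntegrableOn f₂ (Set.Ico (0:ℝ) 1)) :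
      ∫ t in Set.Ico (0:ℝ) 1, |T f₁ t - T f₂ t| = ξ * ∫ t in Set.Ico (0:ℝ) 1, |f₁ t - f₂ t| := by
    have hsub (t : ℝ) : T f₁ t - T f₂ t = (1 - ε) *
        rescaleSum dyadicEdge (fun j => 2 ^ (j + 2)) (fun j => b (j + 1)) (f₁ - f₂) t := by
      rw [hTP, hTP, rescaleSum_sub monotone_dyadicEdge]
      ring
    simp_rw [hsub, abs_mul, abs_of_nonneg (sub_nonneg.2 hε1.le), integral_const_mul,
      setIntegral_abs_rescaleSum_dyadicEdge hb_le (h₁.sub h₂), hweight, hξ, Pi.sub_apply]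
    ring
  have hT_int (f : ℝ → ℝ) (hf : IntegrableOn f (Set.Ico (0:ℝ) 1)) :
      IntegrableOn (T f) (Set.Ico (0:ℝ) 1) := by
    rw [hTP]
    exact ((integrableOn_rescaleSum_dyadicEdge hb_le hf).const_mul _).add
      ((hgint.integrable_indicator measurableSet_Ico).integrableOn.const_mul _)
  have hξ1 : ξ < 1 := by
    rw [hξ]
    nlinarith
  refine ⟨fun f₁ f₂ h₁ h₂ => (hcontr f₁ f₂ h₁ h₂).le, hξ1,
    exists_ae_fixedPoint_of_integral_norm_sub_le hξ1 hT_int fun f₁ f₂ h₁ h₂ => ?_⟩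
  simpa only [Real.norm_eq_abs] using (hcontr f₁ f₂ h₁ h₂).le

/-- Let `I = [0,1)`, `0 < ε < 1`, `a ∈ (0, 1/2)`, and write `θ = 1 - 2a` in binary as
`θ = ∑_{j≥1} 2⁻ʲ bⱼ` with `bⱼ ∈ {0,1}`.  With `eⱼ = 1/2 - 2⁻ʲ`, `Iⱼ = [eⱼ, e_{j+1})` and
`S_J f` the rescaling of `f` to `J`, the operator
`Tf = (1-ε) ∑_{j≥1} bⱼ 1_{Iⱼ} S_{Iⱼ} f + (1-ε) 1_{[1/2,1)} g₊`
is a contraction on `L¹(I)` with constant `ξ = (1-ε)(1-2a)/2 < 1`, and hence has a unique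
(up to a.e. equality) fixed point in `L¹(I)`. -/
theorem contraction_fixed_point (ε a : ℝ) (hε : 0 < ε) (hε1 : ε < 1)
    (ha : 0 < a) (ha2 : a < 1 / 2)
    (b : ℕ → ℝ) (hb : ∀ j, b j = 0 ∨ b j = 1)
    (hbin : ∑' j : ℕ, b (j + 1) * ((2 : ℝ) ^ (j + 1))⁻¹ = 1 - 2 * a)
    (g : ℝ → ℝ) (hg : ∀ t, 0 ≤ g t) (hgint : IntegrableOn g (Set.Ico (1/2 : ℝ) 1))
    (e : ℕ → ℝ) (he : e = fun j => 1 / 2 - ((2 : ℝ) ^ j)⁻¹)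
    (T : (ℝ → ℝ) → ℝ → ℝ)
    (hT : T = fun f t =>
      (1 - ε) * (∑' j : ℕ, b (j + 1) *
          (Set.Ico (e (j + 1)) (e (j + 2))).indicator
            (fun s => f ((s - e (j + 1)) * 2 ^ (j + 2))) t) +
      (1 - ε) * (Set.Ico (1/2 : ℝ) 1).indicator g t)
    (ξ : ℝ) (hξ : ξ = (1 - ε) * (1 - 2 * a) / 2) :
    (∀ f₁ f₂ : ℝ → ℝ, IntegrableOn f₁ (Set.Ico (0:ℝ) 1) →
        IntegrableOn f₂ (Set.Ico (0:ℝ) 1) →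
      ∫ t in Set.Ico (0:ℝ) 1, |T f₁ t - T f₂ t| ≤ ξ * ∫ t in Set.Ico (0:ℝ) 1, |f₁ t - f₂ t|) ∧
    ξ < 1 ∧
    (∃ f : ℝ → ℝ, IntegrableOn f (Set.Ico (0:ℝ) 1) ∧
      (∀ᵐ t ∂(volume.restrict (Set.Ico (0:ℝ) 1)), T f t = f t) ∧
      ∀ h : ℝ → ℝ, IntegrableOn h (Set.Ico (0:ℝ) 1) →
        (∀ᵐ t ∂(volume.restrict (Set.Ico (0:ℝ) 1)), T h t = h t) →
        ∀ᵐ t ∂(volume.restrict (Set.Ico (0:ℝ) 1)), h t = f t) :=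
  contraction_fixed_point_general ε a hε hε1 ha b hb hbin g hgint e he T hT ξ hξ
end

section
/- Let 0 < ε < 1, x ∈ (0,1), δ = (1+ε)/(1−ε), and let N be determined by δ^N being approximately (2−ε)/(1+x(1−ε)). With xⱼ = δʲ(1/(1−ε)+x) − 1/(1−ε), the sum ∑_{j=0}^{N} 2ε/(1 − δʲ(1+x)) converges as ε → 0 to ∫₁^{2/(1+x)} dy/(y(1 − y(x+1))) = log(2x/(x+1)). Consequently, ∏_{j=0}^{N} xⱼ/(xⱼ + 2ε) → 2x/(x+1) as ε → 0. -/
/-!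
Write `δ = (1+ε)/(1-ε)`. The points satisfy `xⱼ₊₁ = δ (xⱼ + 2ε) + O(ε³)`, so the product
`∏_{j≤N} xⱼ/(xⱼ+2ε)` telescopes, up to a factor `1 + O(ε)`, to `δ^{N+1} x / x_{N+1}`, and
`δ^{N+1} → 2/(1+x)`, `x_{N+1} → 1` by the choice of `N`. In logarithmic form each summand
`2ε/(1 - δʲ(1+x))` differs from `log (xⱼ/(xⱼ+2ε))` by `O(ε²)`, and there are only `O(1/ε)`
summands since `δᴺ < 2`; so the sum has the same limit `log (2x/(x+1))` as the log of the
product. The integral is evaluated with the antiderivative `log y - log ((x+1)y - 1)`.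
-/

open Filter Real Finset Topology

theorem integral_one_div_mul_one_sub_mul {a b c : ℝ} (hc : 0 < c) (ha : 1 < c * a)
    (hb : 1 < c * b) :
    ∫ y in a..b, 1 / (y * (1 - y * c)) = (log b - log (c * b - 1)) - (log a - log (c * a - 1)) := by
  have hpos : ∀ y ∈ Set.uIcc a b, 0 < y ∧ 0 < c * y - 1 := by
    intro y hy
    have hcy : 1 < c * y := by
      rcases Set.mem_uIcc.mp hy with ⟨hay, -⟩ | ⟨hby, -⟩ <;> nlinarith
    exact ⟨pos_of_mul_pos_right (by linarith) hc.le, by linarith⟩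
  refine intervalIntegral.integral_eq_sub_of_hasDerivAt
    (f := fun y => log y - log (c * y - 1)) (fun y hy => ?_) ?_
  · obtain ⟨hy, hcy⟩ := hpos y hy
    have hlin : HasDerivAt (fun y => c * y - 1) c y := by
      simpa using ((hasDerivAt_id y).const_mul c).sub_const 1
    refine ((hasDerivAt_log hy.ne').sub ((hasDerivAt_log hcy.ne').comp y hlin)).congr_deriv ?_
    have hne : 1 - y * c ≠ 0 := by linarith
    have hy0 : y ≠ 0 := hy.ne'
    rw [show c * y - 1 = -(1 - y * c) by ring]
    field_simp
    ring
  · refine ContinuousOn.intervalIntegrable (continuousOn_const.div (by fun_prop) fun y hy => ?_)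
    obtain ⟨hy, hcy⟩ := hpos y hy
    exact mul_ne_zero hy.ne' (by linarith)

theorem abs_log_one_add_sub_le_sq {u : ℝ} (hu : 0 ≤ u) : |log (1 + u) - u| ≤ u ^ 2 := by
  have h1u : 0 < 1 + u := by linarith
  have hupper := log_le_sub_one_of_pos h1u
  have hlower := one_sub_inv_le_log_of_pos h1u
  have hinv : u - u ^ 2 ≤ 1 - (1 + u)⁻¹ := by
    rw [← sub_nonneg]
    have : 1 - (1 + u)⁻¹ - (u - u ^ 2) = u ^ 3 / (1 + u) := by field_simp; ring
    rw [this]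
    positivity
  rw [abs_le]
  constructor <;> nlinarith

theorem abs_log_one_add_div_sub_div_le {e x X D : ℝ} (he : 0 ≤ e) (hx : 0 < x) (hX : x ≤ X)
    (hD : x ≤ D) : |log (1 + e / X) - e / D| ≤ (e / x) ^ 2 + e * |D - X| / x ^ 2 := by
  have hX0 : 0 < X := hx.trans_le hX
  have hD0 : 0 < D := hx.trans_le hD
  have hlog : |log (1 + e / X) - e / X| ≤ (e / x) ^ 2 :=
    (abs_log_one_add_sub_le_sq (by positivity)).trans
      (pow_le_pow_left₀ (by positivity) (div_le_div_of_nonneg_left he hx hX) 2)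
  have hdiv : |e / X - e / D| ≤ e * |D - X| / x ^ 2 := by
    rw [div_sub_div _ _ hX0.ne' hD0.ne', abs_div, abs_of_pos (mul_pos hX0 hD0),
      show e * D - X * e = e * (D - X) by ring, abs_mul, abs_of_nonneg he]
    exact div_le_div_of_nonneg_left (by positivity) (by positivity)
      (by rw [sq]; exact mul_le_mul hX hD hx.le hX0.le)
  calc |log (1 + e / X) - e / D| ≤ |log (1 + e / X) - e / X| + |e / X - e / D| :=
        abs_sub_le _ _ _
    _ ≤ _ := add_le_add hlog hdiv

theorem abs_sum_sub_sum_le_of_sq {f g : ℕ → ℝ} {n : ℕ} {ε C : ℝ} (hε : 0 ≤ ε) (hC : 0 ≤ C)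
    (hn : (n + 1) * ε ≤ 1) (h : ∀ j ≤ n, |f j - g j| ≤ C * ε ^ 2) :
    |∑ j ∈ range (n + 1), f j - ∑ j ∈ range (n + 1), g j| ≤ C * ε := by
  rw [← sum_sub_distrib]
  calc |∑ j ∈ range (n + 1), (f j - g j)| ≤ ∑ j ∈ range (n + 1), |f j - g j| :=
        abs_sum_le_sum_abs _ _
    _ ≤ ∑ _j ∈ range (n + 1), C * ε ^ 2 :=
        sum_le_sum fun j hj => h j (Nat.lt_succ_iff.mp (mem_range.mp hj))
    _ = C * ε * ((n + 1) * ε) := by rw [sum_const, card_range, nsmul_eq_mul]; push_cast; ring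
    _ ≤ C * ε := mul_le_of_le_one_right (by positivity) hn

theorem tendsto_of_abs_sub_le_mul {f g : ℝ → ℝ} {l : Filter ℝ} {a C : ℝ} (hl : l ≤ 𝓝 0)
    (hg : Tendsto g l (𝓝 a)) (h : ∀ᶠ ε in l, |f ε - g ε| ≤ C * ε) : Tendsto f l (𝓝 a) := by
  have hdiff : Tendsto (fun ε => f ε - g ε) l (𝓝 0) :=
    squeeze_zero_norm' h (by simpa using (tendsto_id.mono_left hl).const_mul C)
  simpa using hdiff.add hg

theorem tendsto_pow_succ_of_pow_le_of_le_pow {α : Type*} {l : Filter α} {u g : α → ℝ}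
    {n : α → ℕ} {L : ℝ} (hu : Tendsto u l (𝓝 1)) (hg : Tendsto g l (𝓝 L))
    (hu0 : ∀ᶠ a in l, 0 ≤ u a) (hlow : ∀ᶠ a in l, u a ^ n a ≤ g a)
    (hup : ∀ᶠ a in l, g a ≤ u a ^ (n a + 1)) :
    Tendsto (fun a => u a ^ (n a + 1)) l (𝓝 L) := by
  refine tendsto_of_tendsto_of_tendsto_of_le_of_le' hg (by simpa using hu.mul hg) hup ?_
  filter_upwards [hu0, hlow] with a hu0 hlow
  rw [pow_succ, mul_comm]
  exact mul_le_mul_of_nonneg_left hlow hu0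

theorem tendsto_prod_of_tendsto_sum_log {α : Type*} {l : Filter α} {f : α → ℕ → ℝ}
    {s : α → Finset ℕ} {L : ℝ} (hL : 0 < L) (hf : ∀ᶠ a in l, ∀ j ∈ s a, 0 < f a j)
    (h : Tendsto (fun a => ∑ j ∈ s a, log (f a j)) l (𝓝 (log L))) :
    Tendsto (fun a => ∏ j ∈ s a, f a j) l (𝓝 L) := by
  have hexp := (continuous_exp.tendsto _).comp h
  rw [Function.comp_def, exp_log hL] at hexp
  refine hexp.congr' ?_
  filter_upwards [hf] with a hf
  rw [exp_sum]
  exact prod_congr rfl fun j hj => exp_log (hf j hj)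

namespace RiemannSumLimit

/-- `ratio ε` is the paper's `δ`. -/
noncomputable def ratio (ε : ℝ) : ℝ := (1 + ε) / (1 - ε)

/-- `orbit ε x j` is the paper's `xⱼ`. -/
noncomputable def orbit (ε x : ℝ) (j : ℕ) : ℝ := ratio ε ^ j * (1 / (1 - ε) + x) - 1 / (1 - ε)

variable {ε x : ℝ}

theorem one_add_two_mul_le_ratio (h0 : 0 ≤ ε) (h1 : ε < 1) : 1 + 2 * ε ≤ ratio ε := by
  rw [ratio, le_div_iff₀ (by linarith)]
  nlinarith

theorem one_le_ratio (h0 : 0 ≤ ε) (h1 : ε < 1) : 1 ≤ ratio ε := by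
  linarith [one_add_two_mul_le_ratio h0 h1]

theorem orbit_zero : orbit ε x 0 = x := by simp [orbit]

theorem orbit_succ (h1 : ε ≠ 1) (j : ℕ) :
    orbit ε x (j + 1) = ratio ε * (orbit ε x j + 2 * ε) + 2 * ε ^ 3 / (1 - ε) ^ 2 := by
  have : 1 - ε ≠ 0 := sub_ne_zero.mpr (Ne.symm h1)
  simp only [orbit, ratio, pow_succ]
  field_simp
  ring

theorem le_orbit (h0 : 0 ≤ ε) (h1 : ε < 1) (hx : 0 ≤ x) (j : ℕ) : x ≤ orbit ε x j := by
  have hδ : 1 ≤ ratio ε ^ j := one_le_pow₀ (one_le_ratio h0 h1)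
  have ha : 0 ≤ 1 / (1 - ε) := one_div_nonneg.mpr (by linarith)
  unfold orbit
  nlinarith

theorem ratio_pow_mul_sub_one_sub_orbit (h1 : ε ≠ 1) (j : ℕ) :
    ratio ε ^ j * (1 + x) - 1 - orbit ε x j = ε / (1 - ε) * (1 - ratio ε ^ j) := by
  have : 1 - ε ≠ 0 := sub_ne_zero.mpr (Ne.symm h1)
  simp only [orbit]
  field_simp
  ring

theorem le_ratio_pow_mul_sub_one (h0 : 0 ≤ ε) (h1 : ε < 1) (hx : 0 ≤ x) (j : ℕ) :
    x ≤ ratio ε ^ j * (1 + x) - 1 := by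
  have hδ : 1 ≤ ratio ε ^ j := one_le_pow₀ (one_le_ratio h0 h1)
  nlinarith

theorem abs_summand_sub_log_factor_le (h0 : 0 < ε) (hε : ε ≤ 1 / 2) (hx : 0 < x) {j : ℕ}
    (hj : ratio ε ^ j ≤ 2) :
    |2 * ε / (1 - ratio ε ^ j * (1 + x)) - log (orbit ε x j / (orbit ε x j + 2 * ε))| ≤
      8 / x ^ 2 * ε ^ 2 := by
  set X := orbit ε x j
  set D := ratio ε ^ j * (1 + x) - 1
  have hX : x ≤ X := le_orbit h0.le (by linarith) hx.le j
  have hD : x ≤ D := le_ratio_pow_mul_sub_one h0.le (by linarith) hx.le j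
  have hDX : |D - X| ≤ 2 * ε := by
    have hδ : 1 ≤ ratio ε ^ j := one_le_pow₀ (one_le_ratio h0.le (by linarith))
    have hc : ε / (1 - ε) ≤ 2 * ε := by rw [div_le_iff₀ (by linarith)]; nlinarith
    rw [ratio_pow_mul_sub_one_sub_orbit (by linarith), abs_mul,
      abs_of_nonneg (div_nonneg h0.le (by linarith)), abs_of_nonpos (by linarith)]
    nlinarith
  have hsummand : 2 * ε / (1 - ratio ε ^ j * (1 + x)) = -(2 * ε / D) := by
    rw [← div_neg, neg_sub]
  have hfactor : log (X / (X + 2 * ε)) = -log (1 + 2 * ε / X) := by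
    have : X ≠ 0 := by linarith
    rw [← log_inv]
    congr 1
    field_simp
  rw [hsummand, hfactor, neg_sub_neg]
  calc |log (1 + 2 * ε / X) - 2 * ε / D| ≤ (2 * ε / x) ^ 2 + 2 * ε * |D - X| / x ^ 2 :=
        abs_log_one_add_div_sub_div_le (by positivity) hx hX hD
    _ ≤ (2 * ε / x) ^ 2 + 2 * ε * (2 * ε) / x ^ 2 := by gcongr
    _ = 8 / x ^ 2 * ε ^ 2 := by ring

theorem abs_log_factor_sub_log_ratio_le (h0 : 0 < ε) (hε : ε ≤ 1 / 2) (hx : 0 < x) (j : ℕ) :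
    |log (orbit ε x j / (orbit ε x j + 2 * ε)) -
        (log (ratio ε) + (log (orbit ε x j) - log (orbit ε x (j + 1))))| ≤ 8 / x * ε ^ 2 := by
  set X := orbit ε x j
  set b := ratio ε * (X + 2 * ε)
  set η := 2 * ε ^ 3 / (1 - ε) ^ 2
  have hX : x ≤ X := le_orbit h0.le (by linarith) hx.le j
  have hδ : 1 ≤ ratio ε := one_le_ratio h0.le (by linarith)
  have hb : x ≤ b := by nlinarith
  have hb0 : 0 < b := by linarith
  have hη : η ≤ 8 * ε ^ 2 := by
    rw [div_le_iff₀ (by nlinarith)]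
    nlinarith [pow_pos h0 3]
  have hlog : log (X / (X + 2 * ε)) - (log (ratio ε) + (log X - log (orbit ε x (j + 1)))) =
      log ((b + η) / b) := by
    rw [orbit_succ (by linarith), log_div (by positivity) hb0.ne', log_div (by linarith)
      (by linarith), log_mul (by linarith) (by linarith)]
    ring
  have hratio : 1 ≤ (b + η) / b := by rw [le_div_iff₀ hb0]; linarith [show 0 ≤ η by positivity]
  rw [hlog, abs_of_nonneg (log_nonneg hratio)]
  calc log ((b + η) / b) ≤ (b + η) / b - 1 := log_le_sub_one_of_pos (by linarith)
    _ = η / b := by field_simp; ring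
    _ ≤ 8 * ε ^ 2 / x := div_le_div₀ (by positivity) hη hx hb
    _ = 8 / x * ε ^ 2 := by ring

theorem succ_mul_le_one (h0 : 0 < ε) (hε : ε ≤ 1 / 2) {n : ℕ} (hn : ratio ε ^ n ≤ 2) :
    ((n : ℝ) + 1) * ε ≤ 1 := by
  have hbernoulli : 1 + n * (2 * ε) ≤ ratio ε ^ n :=
    (one_add_mul_le_pow (by linarith) n).trans
      (pow_le_pow_left₀ (by linarith) (one_add_two_mul_le_ratio h0.le (by linarith)) n)
  nlinarith

theorem abs_riemannSum_sub_sum_log_factor_le (h0 : 0 < ε) (hε : ε ≤ 1 / 2) (hx : 0 < x)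
    {n : ℕ} (hn : ratio ε ^ n ≤ 2) :
    |∑ j ∈ range (n + 1), 2 * ε / (1 - ratio ε ^ j * (1 + x)) -
        ∑ j ∈ range (n + 1), log (orbit ε x j / (orbit ε x j + 2 * ε))| ≤ 8 / x ^ 2 * ε := by
  have hδ : 1 ≤ ratio ε := one_le_ratio h0.le (by linarith)
  refine abs_sum_sub_sum_le_of_sq h0.le (by positivity) (succ_mul_le_one h0 hε hn) fun j hj => ?_
  exact abs_summand_sub_log_factor_le h0 hε hx ((pow_le_pow_right₀ hδ hj).trans hn)

theorem abs_sum_log_factor_sub_telescoped_le (h0 : 0 < ε) (hε : ε ≤ 1 / 2) (hx : 0 < x)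
    {n : ℕ} (hn : ratio ε ^ n ≤ 2) :
    |∑ j ∈ range (n + 1), log (orbit ε x j / (orbit ε x j + 2 * ε)) -
        ((n + 1) * log (ratio ε) + log x - log (orbit ε x (n + 1)))| ≤ 8 / x * ε := by
  have htelescope : ∑ j ∈ range (n + 1), (log (ratio ε) +
      (log (orbit ε x j) - log (orbit ε x (j + 1)))) =
      (n + 1) * log (ratio ε) + log x - log (orbit ε x (n + 1)) := by
    rw [sum_add_distrib, sum_const, card_range, nsmul_eq_mul, sum_range_sub', orbit_zero]
    push_cast
    ring
  rw [← htelescope]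
  exact abs_sum_sub_sum_le_of_sq h0.le (by positivity) (succ_mul_le_one h0 hε hn)
    fun j _ => abs_log_factor_sub_log_ratio_le h0 hε hx j

theorem tendsto_ratio : Tendsto ratio (𝓝[>] 0) (𝓝 1) := by
  have : ContinuousAt ratio 0 := by unfold ratio; fun_prop (disch := norm_num)
  simpa [ratio] using this.tendsto.mono_left nhdsWithin_le_nhds

theorem tendsto_telescoped {N : ℝ → ℕ} (hx : 0 < x)
    (hpow : Tendsto (fun ε => ratio ε ^ (N ε + 1)) (𝓝[>] 0) (𝓝 (2 / (1 + x)))) :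
    Tendsto (fun ε => (N ε + 1) * log (ratio ε) + log x - log (orbit ε x (N ε + 1)))
      (𝓝[>] 0) (𝓝 (log (2 * x / (x + 1)))) := by
  have hinv : Tendsto (fun ε : ℝ => 1 / (1 - ε)) (𝓝[>] 0) (𝓝 1) := by
    have : ContinuousAt (fun ε : ℝ => 1 / (1 - ε)) 0 := by fun_prop (disch := norm_num)
    simpa using this.tendsto.mono_left nhdsWithin_le_nhds
  have horbit : Tendsto (fun ε => orbit ε x (N ε + 1)) (𝓝[>] 0) (𝓝 1) := by
    have := (hpow.mul (hinv.add_const x)).sub hinv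
    rwa [div_mul_cancel₀ _ (by linarith), show (2 : ℝ) - 1 = 1 by norm_num] at this
  have hlim := ((hpow.log (by positivity)).add_const (log x)).sub (horbit.log one_ne_zero)
  have hL : log (2 / (1 + x)) + log x - log 1 = log (2 * x / (x + 1)) := by
    rw [log_one, sub_zero, ← log_mul (by positivity) hx.ne', add_comm 1 x]
    ring_nf
  rw [hL] at hlim
  refine hlim.congr fun ε => ?_
  push_cast [log_pow]
  rfl

theorem integral_eq_log (hx : 0 < x) :
    ∫ y in (1 : ℝ)..(2 / (1 + x)), 1 / (y * (1 - y * (x + 1))) = log (2 * x / (x + 1)) := by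
  have hcb : (x + 1) * (2 / (1 + x)) = 2 := by field_simp; ring
  rw [integral_one_div_mul_one_sub_mul (by linarith) (by linarith) (by linarith), hcb,
    mul_one, add_sub_cancel_right, log_one, show (2 : ℝ) - 1 = 1 by norm_num, log_one, sub_zero, zero_sub, sub_neg_eq_add, ← log_mul (by positivity) hx.ne', add_comm 1 x]
  ring_nf

theorem eventually_regime {N : ℝ → ℕ} (hx : 0 ≤ x)
    (hN : ∀ ε ∈ Set.Ioo (0 : ℝ) 1, ratio ε ^ N ε < (2 - ε) / (1 + x * (1 - ε))) :
    ∀ᶠ ε in 𝓝[>] 0, 0 < ε ∧ ε ≤ 1 / 2 ∧ ratio ε ^ N ε ≤ 2 := by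
  filter_upwards [Ioo_mem_nhdsGT (show (0 : ℝ) < 1 / 2 by norm_num)] with ε ⟨h0, hε⟩
  refine ⟨h0, hε.le, (hN ε ⟨h0, by linarith⟩).le.trans ?_⟩
  rw [div_le_iff₀ (by nlinarith)]
  nlinarith

end RiemannSumLimit

open RiemannSumLimit

/-- The Riemann-sum limit: with `δ = (1+ε)/(1-ε)`, `N = N(ε,x)` the largest integer with
`δ^N < (2-ε)/(1+x(1-ε))`, and `xⱼ = δʲ(1/(1-ε)+x) - 1/(1-ε)`, as `ε → 0⁺` the sum
`∑_{j=0}^{N} 2ε/(1 - δʲ(1+x))` converges to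
`∫₁^{2/(1+x)} dy/(y(1-y(x+1))) = log(2x/(x+1))`, and consequently
`∏_{j=0}^{N} xⱼ/(xⱼ + 2ε) → 2x/(x+1)`. -/
theorem riemann_sum_limit (x : ℝ) (hx : x ∈ Set.Ioo (0:ℝ) 1) (N : ℝ → ℕ)
    (hN : ∀ ε ∈ Set.Ioo (0:ℝ) 1,
      ((1 + ε) / (1 - ε)) ^ N ε < (2 - ε) / (1 + x * (1 - ε)) ∧
      (2 - ε) / (1 + x * (1 - ε)) ≤ ((1 + ε) / (1 - ε)) ^ (N ε + 1)) :
    (∫ y in (1:ℝ)..(2 / (1 + x)), 1 / (y * (1 - y * (x + 1))) =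
      Real.log (2 * x / (x + 1))) ∧
    Tendsto (fun ε : ℝ =>
        ∑ j ∈ Finset.range (N ε + 1), 2 * ε / (1 - ((1 + ε) / (1 - ε)) ^ j * (1 + x)))
      (nhdsWithin 0 (Set.Ioi 0)) (nhds (Real.log (2 * x / (x + 1)))) ∧
    Tendsto (fun ε : ℝ =>
        ∏ j ∈ Finset.range (N ε + 1),
          (((1 + ε) / (1 - ε)) ^ j * (1 / (1 - ε) + x) - 1 / (1 - ε)) /
            ((((1 + ε) / (1 - ε)) ^ j * (1 / (1 - ε) + x) - 1 / (1 - ε)) + 2 * ε))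
      (nhdsWithin 0 (Set.Ioi 0)) (nhds (2 * x / (x + 1))) := by
  have hx0 : 0 < x := hx.1
  have hregime := eventually_regime hx0.le fun ε hε => (hN ε hε).1
  have hIoo : ∀ᶠ ε in 𝓝[>] (0 : ℝ), ε ∈ Set.Ioo (0 : ℝ) 1 :=
    Ioo_mem_nhdsGT (show (0 : ℝ) < 1 by norm_num)
  have hg : Tendsto (fun ε : ℝ => (2 - ε) / (1 + x * (1 - ε))) (𝓝[>] 0) (𝓝 (2 / (1 + x))) := by
    have : ContinuousAt (fun ε : ℝ => (2 - ε) / (1 + x * (1 - ε))) 0 := by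
      fun_prop (disch := simp only [sub_zero, mul_one]; linarith)
    simpa using this.tendsto.mono_left nhdsWithin_le_nhds
  have hpow := tendsto_pow_succ_of_pow_le_of_le_pow tendsto_ratio hg
    (hregime.mono fun ε h => zero_le_one.trans (one_le_ratio h.1.le (by linarith [h.2.1])))
    (hIoo.mono fun ε hε => (hN ε hε).1.le) (hIoo.mono fun ε hε => (hN ε hε).2)
  have hsum_log := tendsto_of_abs_sub_le_mul nhdsWithin_le_nhds (tendsto_telescoped hx0 hpow)
    (hregime.mono fun ε h => abs_sum_log_factor_sub_telescoped_le h.1 h.2.1 hx0 h.2.2)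
  refine ⟨integral_eq_log hx0, tendsto_of_abs_sub_le_mul nhdsWithin_le_nhds hsum_log
    (hregime.mono fun ε h => abs_riemannSum_sub_sum_log_factor_le h.1 h.2.1 hx0 h.2.2),
    tendsto_prod_of_tendsto_sum_log (by positivity) (hregime.mono fun ε h j _ => ?_) hsum_log⟩
  have hpos := hx0.trans_le (le_orbit h.1.le (by linarith [h.2.1]) hx0.le j)
  exact div_pos hpos (add_pos hpos (by linarith [h.1]))
end
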